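/- Let L/K be a degree-2 Galois field extension of characteristic zero with nontrivial automorphism a ↦ ā, and let C₄ = ⟨y⟩ act on L through the surjection C₄ → Gal(L/K) with kernel ⟨y²⟩. The one-dimensional L-representation W of ⟨y²⟩ on which y² acts by −1 extends to a semilinear representation of C₄ over L if and only if there exists a ∈ L with a·ā = −1. -/
import Mathlib

/-- Let `L/K` be a degree-2 Galois field extension of characteristic
zero with nontrivial automorphism `σ` (so `σ a = ā`), and let `C₄ = ⟨y⟩` act on `L`
through the surjection `C₄ → Gal(L/K)` with kernel `⟨y²⟩`.  The one-dimensional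
`L`-representation `W` of `⟨y²⟩` on which `y²` acts by `−1` extends to a semilinear
representation of `C₄` over `L` if and only if there exists `a ∈ L` with `a · σ a = −1`.
Here `C₄ = Multiplicative (ZMod 4)`, `y = ofAdd 1`, and such an extension is a
homomorphism `ρ : C₄ → GL_K(L)` with `y` acting `σ`-semilinearly and `y²` acting
`L`-linearly by `−1`. -/
theorem stmt14 {K L : Type*} [Field K] [Field L] [Algebra K L] [CharZero K]
    (hdim : Module.finrank K L = 2)
    (σ : L ≃ₐ[K] L) (hσ : σ ≠ AlgEquiv.refl) :
    (∃ ρ : Multiplicative (ZMod 4) →* (L ≃ₗ[K] L),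
        (∀ c v : L, ρ (Multiplicative.ofAdd (1 : ZMod 4)) (c * v)
            = σ c * ρ (Multiplicative.ofAdd (1 : ZMod 4)) v) ∧
        (∀ c v : L, ρ (Multiplicative.ofAdd (2 : ZMod 4)) (c * v)
            = c * ρ (Multiplicative.ofAdd (2 : ZMod 4)) v) ∧
        (∀ v : L, ρ (Multiplicative.ofAdd (2 : ZMod 4)) v = -v))
      ↔ ∃ a : L, a * σ a = -1 := by
  constructor
  · rintro ⟨ρ, h1, _h2, h3⟩
    set y : Multiplicative (ZMod 4) := Multiplicative.ofAdd (1 : ZMod 4) with hy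
    refine ⟨ρ y 1, ?_⟩
    have e2 : (Multiplicative.ofAdd (2 : ZMod 4)) = y * y := by decide
    have h := h3 1
    rw [e2, map_mul] at h
    have hmul : (ρ y * ρ y) 1 = ρ y (ρ y 1) := rfl
    rw [hmul] at h
    have h' : ρ y (ρ y 1 * 1) = σ (ρ y 1) * ρ y 1 := by
      rw [h1 (ρ y 1) 1]
    rw [mul_one] at h'
    rw [h'] at h
    rw [mul_comm]
    exact h
  · rintro ⟨a, ha⟩
    have hFD : FiniteDimensional K L := Module.finite_of_finrank_pos (by omega)
    -- the automorphism group has at most 2 elements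
    have hcard : Fintype.card (L ≃ₐ[K] L) ≤ 2 := by
      calc Fintype.card (L ≃ₐ[K] L) ≤ Fintype.card (L →ₐ[K] L) :=
            Fintype.card_le_of_injective (fun e => e.toAlgHom)
              (fun e f h => AlgEquiv.ext fun x => DFunLike.congr_fun h x)
        _ ≤ Module.finrank L (L →ₗ[K] L) := finrank_algHom K L
        _ = Module.finrank K L := Module.finrank_linearMap_self K L L
        _ = 2 := hdim
    have hσ1 : σ ≠ 1 := hσ
    have hσσ : ∀ x : L, σ (σ x) = x := by
      have hdvd : orderOf σ ∣ Fintype.card (L ≃ₐ[K] L) := orderOf_dvd_card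
      have h1 : orderOf σ ≠ 1 := fun h => hσ1 (orderOf_eq_one_iff.mp h)
      have h2 : orderOf σ ≤ 2 := le_trans (Nat.le_of_dvd Fintype.card_pos hdvd) hcard
      have hpos : 0 < orderOf σ := orderOf_pos σ
      have h3 : orderOf σ = 2 := by omega
      intro x
      have := pow_orderOf_eq_one σ
      rw [h3] at this
      have : (σ * σ) x = (1 : L ≃ₐ[K] L) x := by rw [← sq, this]
      simpa using this
    have hane : a ≠ 0 := by
      intro h
      rw [h, zero_mul] at ha
      exact one_ne_zero (neg_eq_zero.mp ha.symm)
    -- the semilinear map g v = σ v * a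
    set g : L ≃ₗ[K] L :=
      { toFun := fun v => σ v * a
        map_add' := fun x y => by show σ (x + y) * a = σ x * a + σ y * a; rw [map_add, add_mul]
        map_smul' := fun k v => by
          simp [Algebra.smul_def, map_mul, σ.commutes, mul_assoc]
        invFun := fun v => σ (v * a⁻¹)
        left_inv := fun v => by
          show σ (σ v * a * a⁻¹) = v
          rw [mul_inv_cancel_right₀ hane, hσσ]
        right_inv := fun v => by
          show σ (σ (v * a⁻¹)) * a = v
          rw [hσσ, inv_mul_cancel_right₀ hane] } with hg
    have hgapp : ∀ v : L, g v = σ v * a := fun v => rfl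
    have hg2 : ∀ v : L, g (g v) = -v := by
      intro v
      rw [hgapp, hgapp, map_mul, hσσ, mul_assoc, mul_comm (σ a) a, ha, mul_neg_one]
    have hg4 : g ^ 4 = 1 := by
      ext v
      show (g ^ 4) v = v
      have : (g ^ 4) v = g (g (g (g v))) := by
        rw [show (4 : ℕ) = 1 + 1 + 1 + 1 by norm_num, pow_succ, pow_succ, pow_succ, pow_one]
        rfl
      rw [this, hg2, hg2, neg_neg]
    have hpowmod : ∀ n : ℕ, g ^ (n % 4) = g ^ n := fun n => (pow_eq_pow_mod n hg4).symm
    refine ⟨{ toFun := fun x => g ^ (x.toAdd.val)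
              map_one' := by
                show g ^ ((0 : ZMod 4)).val = 1
                rw [ZMod.val_zero, pow_zero]
              map_mul' := fun x y => by
                show g ^ ((x.toAdd + y.toAdd).val) = g ^ x.toAdd.val * g ^ y.toAdd.val
                rw [ZMod.val_add, hpowmod, pow_add] }, ?_, ?_, ?_⟩
    · intro c v
      show (g ^ ((1 : ZMod 4)).val) (c * v) = σ c * (g ^ ((1 : ZMod 4)).val) v
      have : ((1 : ZMod 4)).val = 1 := rfl
      rw [this, pow_one, hgapp, hgapp, map_mul, mul_assoc]
    · intro c v
      show (g ^ ((2 : ZMod 4)).val) (c * v) = c * (g ^ ((2 : ZMod 4)).val) v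
      have h2 : ((2 : ZMod 4)).val = 2 := rfl
      have hsq : ∀ w : L, (g ^ 2) w = -w := by
        intro w
        have : (g ^ 2) w = g (g w) := by rw [sq]; rfl
        rw [this, hg2]
      rw [h2, hsq, hsq, mul_neg]
    · intro v
      show (g ^ ((2 : ZMod 4)).val) v = -v
      have h2 : ((2 : ZMod 4)).val = 2 := rfl
      have : (g ^ 2) v = g (g v) := by rw [sq]; rfl
      rw [h2, this, hg2]
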